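/- Let d ≥ 3, ℓ ≥ 6, N ≥ 1 and L ≥ 3 be integers, let (Y^x)_{x∈ℤ^d} be a coalescing family of trajectories in ℤ^d, let T ≥ 0, let ξ : ℤ^d → {0,1}, and let 𝒯 ∈ Λ_N be a proper embedding. If B(𝒯(m),L) ↔*_ξ B(𝒯(m),2L)^c for every leaf m ∈ T_(N), then there exists an admissible pair (𝒳,𝒴) ∈ 𝒫_𝒯 such that: for every y ∈ 𝒴, sup_{0≤t≤T} |Y^y_t − y| > L/4; and for all x, z ∈ 𝒳 with |x−z| = 1: ξ(x) = ξ(z) = 1, sup_{0≤t≤T} |Y^x_t − x| ≤ L/4, sup_{0≤t≤T} |Y^z_t − z| ≤ L/4, and Y^x_t ≠ Y^z_t for all 0 ≤ t ≤ T. -/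
import Mathlib


/-- The ℓ∞ norm of a point of ℤ^d. -/
def normInf {d : ℕ} (x : Fin d → ℤ) : ℤ :=
  ((Finset.univ.sup fun i => (x i).natAbs : ℕ) : ℤ)

/-- The ℓ∞ ball `B(z, r)` in ℤ^d. -/
def ballInf {d : ℕ} (z : Fin d → ℤ) (r : ℤ) : Set (Fin d → ℤ) :=
  {y | normInf (y - z) ≤ r}

/-- A proper embedding of the binary tree of height `N` into ℤ^d, with scales
`L_k = L·ℓ^k` and renormalized lattices `𝓛_k = L_k·ℤ^d`. Tree vertices are encoded
as lists over `Fin 2` (only lists of length ≤ N are relevant). -/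
def IsProperEmbedding (d ℓ L N : ℕ) (T : List (Fin 2) → (Fin d → ℤ)) : Prop :=
  T [] = 0 ∧
  (∀ l : List (Fin 2), l.length ≤ N → ∀ i : Fin d,
    ((L : ℤ) * (ℓ : ℤ) ^ (N - l.length)) ∣ T l i) ∧
  (∀ l : List (Fin 2), l.length < N →
    normInf (T (l ++ [0]) - T l) = (L : ℤ) * (ℓ : ℤ) ^ (N - l.length) ∧
    normInf (T (l ++ [1]) - T l) = 2 * ((L : ℤ) * (ℓ : ℤ) ^ (N - l.length)))

/-- An admissible pair `(𝒳, 𝒴)` associated to a proper embedding `T`: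
both sets are contained in the union of the balls `B(T m, 2L)` over leaves `m`;
for every leaf `m`, the pair `(|B(T m,2L) ∩ 𝒳|, |B(T m,2L) ∩ 𝒴|)` is `(2,0)` or
`(0,1)`; and whenever `B(T m,2L) ∩ 𝒳 = {x,y}` with `x ≠ y`, then `|x−y| = 1`. -/
def IsAdmissiblePair (d ℓ L N : ℕ) (T : List (Fin 2) → (Fin d → ℤ))
    (X Y : Set (Fin d → ℤ)) : Prop :=
  (∀ x ∈ X ∪ Y, ∃ m : List (Fin 2), m.length = N ∧ x ∈ ballInf (T m) (2 * (L : ℤ))) ∧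
  (∀ m : List (Fin 2), m.length = N →
    ((ballInf (T m) (2 * (L : ℤ)) ∩ X).ncard = 2 ∧ ballInf (T m) (2 * (L : ℤ)) ∩ Y = ∅) ∨
    (ballInf (T m) (2 * (L : ℤ)) ∩ X = ∅ ∧
      (ballInf (T m) (2 * (L : ℤ)) ∩ Y).ncard = 1)) ∧
  (∀ m : List (Fin 2), m.length = N → ∀ x y : Fin d → ℤ, x ≠ y →
    ballInf (T m) (2 * (L : ℤ)) ∩ X = {x, y} → normInf (x - y) = 1)

/-- A coalescing family of trajectories in ℤ^d: `W x 0 = x` for every `x`, and once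
two trajectories meet they stay together forever. -/
def IsCoalescing {d : ℕ} (W : (Fin d → ℤ) → ℝ → (Fin d → ℤ)) : Prop :=
  (∀ x, W x 0 = x) ∧
  (∀ x y s, 0 ≤ s → W x s = W y s → ∀ t, s ≤ t → W x t = W y t)

/-- `A ↔*_ξ B`: there is a *-connected path of points where `ξ = 1`, starting at a
*-neighbor of a point of `A` and ending at a *-neighbor of a point of `B`. -/
def StarConn {d : ℕ} (ξ : (Fin d → ℤ) → Fin 2) (A B : Set (Fin d → ℤ)) : Prop :=
  ∃ (n : ℕ) (γ : ℕ → Fin d → ℤ),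
    (∀ i < n, normInf (γ (i + 1) - γ i) = 1) ∧
    (∀ i ≤ n, ξ (γ i) = 1) ∧
    (∃ a ∈ A, normInf (γ 0 - a) = 1) ∧
    (∃ b ∈ B, normInf (γ n - b) = 1)


lemma normInf_nonneg {d : ℕ} (x : Fin d → ℤ) : 0 ≤ normInf x := Int.natCast_nonneg _

lemma abs_le_normInf {d : ℕ} (x : Fin d → ℤ) (i : Fin d) : |x i| ≤ normInf x := by
  unfold normInf
  rw [← Int.natCast_natAbs]
  have : (x i).natAbs ≤ Finset.univ.sup fun j => (x j).natAbs :=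
    Finset.le_sup (f := fun j => (x j).natAbs) (Finset.mem_univ i)
  exact_mod_cast this

lemma normInf_le_of_forall {d : ℕ} {x : Fin d → ℤ} {r : ℤ} (hr : 0 ≤ r)
    (h : ∀ i, |x i| ≤ r) : normInf x ≤ r := by
  obtain ⟨n, rfl⟩ := Int.eq_ofNat_of_zero_le hr
  unfold normInf
  have : (Finset.univ.sup fun i => (x i).natAbs) ≤ n := by
    apply Finset.sup_le
    intro i _
    have := h i
    rw [← Int.natCast_natAbs] at this
    exact_mod_cast this
  exact_mod_cast this

lemma normInf_zero {d : ℕ} : normInf (0 : Fin d → ℤ) = 0 := by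
  have h1 : normInf (0 : Fin d → ℤ) ≤ 0 := normInf_le_of_forall le_rfl (by simp)
  exact le_antisymm h1 (normInf_nonneg _)

lemma normInf_eq_zero {d : ℕ} {x : Fin d → ℤ} (h : normInf x = 0) : x = 0 := by
  funext i
  have := abs_le_normInf x i
  rw [h] at this
  simpa using abs_nonpos_iff.mp this

lemma normInf_neg {d : ℕ} (x : Fin d → ℤ) : normInf (-x) = normInf x := by
  unfold normInf; simp

lemma normInf_sub_comm {d : ℕ} (x y : Fin d → ℤ) : normInf (x - y) = normInf (y - x) := by
  rw [← normInf_neg (x - y), neg_sub]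

lemma normInf_add_le {d : ℕ} (x y : Fin d → ℤ) : normInf (x + y) ≤ normInf x + normInf y := by
  apply normInf_le_of_forall (add_nonneg (normInf_nonneg x) (normInf_nonneg y))
  intro i
  calc |(x + y) i| = |x i + y i| := rfl
    _ ≤ |x i| + |y i| := abs_add_le _ _
    _ ≤ normInf x + normInf y := add_le_add (abs_le_normInf x i) (abs_le_normInf y i)

lemma normInf_triangle {d : ℕ} (a b c : Fin d → ℤ) :
    normInf (a - c) ≤ normInf (a - b) + normInf (b - c) := by
  have := normInf_add_le (a - b) (b - c)
  simpa [sub_add_sub_cancel] using this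

lemma normInf_ne_zero_of_ne {d : ℕ} {x y : Fin d → ℤ} (h : normInf (x - y) = 1) : x ≠ y := by
  intro he
  rw [he, sub_self, normInf_zero] at h
  exact one_ne_zero h.symm

lemma perLeaf {d L : ℕ} (hL : 3 ≤ L) {W : (Fin d → ℤ) → ℝ → (Fin d → ℤ)}
    (hW : IsCoalescing W) {T : ℝ} (hT : 0 ≤ T) (ξ : (Fin d → ℤ) → Fin 2)
    (c : Fin d → ℤ)
    (hc : StarConn ξ (ballInf c (L : ℤ)) (ballInf c (2 * (L : ℤ)))ᶜ) :
    (∃ y ∈ ballInf c (2 * (L : ℤ)), ∃ t : ℝ, 0 ≤ t ∧ t ≤ T ∧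
        (L : ℤ) < 4 * normInf (W y t - y)) ∨
    (∃ x z : Fin d → ℤ, x ∈ ballInf c (2 * (L : ℤ)) ∧ z ∈ ballInf c (2 * (L : ℤ)) ∧
      normInf (x - z) = 1 ∧ ξ x = 1 ∧ ξ z = 1 ∧
      (∀ t : ℝ, 0 ≤ t → t ≤ T → 4 * normInf (W x t - x) ≤ (L : ℤ)) ∧
      (∀ t : ℝ, 0 ≤ t → t ≤ T → 4 * normInf (W z t - z) ≤ (L : ℤ)) ∧
      (∀ t : ℝ, 0 ≤ t → t ≤ T → W x t ≠ W z t)) := by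
  classical
  obtain ⟨n, γ, hstep, hopen, ⟨a, ha, ha1⟩, ⟨b, hb, hb1⟩⟩ := hc
  have hLZ : (3 : ℤ) ≤ (L : ℤ) := by exact_mod_cast hL
  -- start point close to center
  have h0 : normInf (γ 0 - c) ≤ (L : ℤ) + 1 := by
    calc normInf (γ 0 - c) ≤ normInf (γ 0 - a) + normInf (a - c) := normInf_triangle _ _ _
      _ ≤ 1 + (L : ℤ) := add_le_add ha1.le ha
      _ = (L : ℤ) + 1 := by ring
  -- end point far from center
  have hn : 2 * (L : ℤ) ≤ normInf (γ n - c) := by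
    have hb' : 2 * (L : ℤ) < normInf (b - c) := by
      simpa [ballInf, Set.mem_compl_iff, Set.mem_setOf_eq, not_le] using hb
    have : normInf (b - c) ≤ normInf (b - γ n) + normInf (γ n - c) := normInf_triangle _ _ _
    rw [normInf_sub_comm b (γ n), hb1] at this
    linarith
  -- first index at distance ≥ 2L
  have hex : ∃ j, 2 * (L : ℤ) ≤ normInf (γ j - c) := ⟨n, hn⟩
  set i := Nat.find hex with hi_def
  have hi_spec : 2 * (L : ℤ) ≤ normInf (γ i - c) := Nat.find_spec hex
  have hi_min : ∀ j < i, ¬ (2 * (L : ℤ) ≤ normInf (γ j - c)) := fun j hj => Nat.find_min hex hj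
  have hin : i ≤ n := Nat.find_le hn
  have hipos : 1 ≤ i := by
    rcases Nat.eq_zero_or_pos i with h | h
    · exfalso
      rw [h] at hi_spec
      linarith
    · exact h
  have hstepi : normInf (γ i - γ (i - 1)) = 1 := by
    have h1 : i - 1 < n := by omega
    have := hstep (i - 1) h1
    have h2 : i - 1 + 1 = i := by omega
    rwa [h2] at this
  have hball : ∀ j ≤ i, γ j ∈ ballInf c (2 * (L : ℤ)) := by
    intro j hj
    rcases lt_or_eq_of_le hj with h | h
    · have := hi_min j h
      simp only [ballInf, Set.mem_setOf_eq]
      linarith [not_le.mp this]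
    · rw [h]
      have hprev := hi_min (i - 1) (by omega)
      have htr := normInf_triangle (γ i) (γ (i - 1)) c
      simp only [ballInf, Set.mem_setOf_eq]
      linarith [not_le.mp hprev, hstepi, htr]
  by_cases hesc : ∃ j ≤ i, ∃ t : ℝ, 0 ≤ t ∧ t ≤ T ∧ (L : ℤ) < 4 * normInf (W (γ j) t - γ j)
  · obtain ⟨j, hj, t, ht0, ht1, hgt⟩ := hesc
    exact Or.inl ⟨γ j, hball j hj, t, ht0, ht1, hgt⟩
  · push_neg at hesc
    by_cases hmeet : ∃ j < i, ∀ t : ℝ, 0 ≤ t → t ≤ T → W (γ j) t ≠ W (γ (j + 1)) t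
    · obtain ⟨j, hj, hne⟩ := hmeet
      refine Or.inr ⟨γ j, γ (j + 1), hball j hj.le, hball (j + 1) hj, ?_, hopen j (by omega),
        hopen (j + 1) (by omega), hesc j hj.le, hesc (j + 1) hj, hne⟩
      rw [normInf_sub_comm]
      exact hstep j (by omega)
    · push_neg at hmeet
      exfalso
      -- all consecutive walkers coalesce by time T
      have hcoal : ∀ j < i, W (γ j) T = W (γ (j + 1)) T := by
        intro j hj
        obtain ⟨t, ht0, ht1, heq⟩ := hmeet j hj
        exact hW.2 _ _ t ht0 heq T ht1
      have hchain : ∀ j ≤ i, W (γ 0) T = W (γ j) T := by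
        intro j hj
        induction j with
        | zero => rfl
        | succ k ih => exact (ih (by omega)).trans (hcoal k (by omega))
      have hTi : W (γ 0) T = W (γ i) T := hchain i le_rfl
      have hc0 : 4 * normInf (W (γ 0) T - γ 0) ≤ (L : ℤ) := hesc 0 (Nat.zero_le i) T hT le_rfl
      have hci : 4 * normInf (W (γ i) T - γ i) ≤ (L : ℤ) := hesc i le_rfl T hT le_rfl
      have e : normInf (W (γ 0) T - γ i) = normInf (W (γ i) T - γ i) := by rw [hTi]
      have hdist : normInf (γ 0 - γ i) ≤ normInf (W (γ 0) T - γ 0) + normInf (W (γ i) T - γ i) := by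
        have h3 := normInf_triangle (γ 0) (W (γ 0) T) (γ i)
        have h4 := normInf_sub_comm (γ 0) (W (γ 0) T)
        linarith
      have hfar : (L : ℤ) - 1 ≤ normInf (γ 0 - γ i) := by
        have := normInf_triangle (γ i) (γ 0) c
        rw [normInf_sub_comm (γ i) (γ 0)] at this
        linarith
      linarith

/-- Drift bound: `DB ℓ L j = 2L(ℓ + ℓ² + ⋯ + ℓ^j)`. -/
def DB (ℓ L : ℕ) : ℕ → ℤ
  | 0 => 0
  | (j + 1) => 2 * (L : ℤ) * (ℓ : ℤ) ^ (j + 1) + DB ℓ L j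

lemma DB_nonneg (ℓ L : ℕ) : ∀ j, 0 ≤ DB ℓ L j
  | 0 => le_refl 0
  | (j + 1) => by
      have h1 := DB_nonneg ℓ L j
      have h2 : (0:ℤ) ≤ 2 * (L : ℤ) * (ℓ : ℤ) ^ (j + 1) := by positivity
      simp only [DB]; linarith

lemma DB_key {ℓ L : ℕ} (hℓ : 6 ≤ ℓ) : ∀ j, 2 * DB ℓ L j ≤ (L : ℤ) * (ℓ : ℤ) ^ (j + 1) - (L : ℤ) * (ℓ : ℤ)
  | 0 => by simp [DB, pow_one]
  | (j + 1) => by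
      have ih := DB_key (L := L) hℓ j
      have hℓZ : (6 : ℤ) ≤ (ℓ : ℤ) := by exact_mod_cast hℓ
      have hpow : (0:ℤ) ≤ (L : ℤ) * (ℓ : ℤ) ^ (j + 1) := by positivity
      have key : 5 * ((L:ℤ) * (ℓ:ℤ) ^ (j + 1)) ≤ (L:ℤ) * (ℓ:ℤ) ^ (j + 2) := by
        have : (L:ℤ) * (ℓ:ℤ) ^ (j + 2) = (ℓ:ℤ) * ((L:ℤ) * (ℓ:ℤ) ^ (j + 1)) := by ring
        rw [this]
        nlinarith
      simp only [DB]
      nlinarith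

/-- Any descendant of `l` at depth ≤ N stays within `DB ℓ L (N - l.length)` of `𝒯 l`. -/
lemma drift {d ℓ L N : ℕ} {𝒯 : List (Fin 2) → (Fin d → ℤ)}
    (h𝒯 : IsProperEmbedding d ℓ L N 𝒯) :
    ∀ (r l : List (Fin 2)), (l ++ r).length ≤ N →
      normInf (𝒯 (l ++ r) - 𝒯 l) ≤ DB ℓ L (N - l.length) := by
  intro r
  induction r with
  | nil =>
      intro l _
      simp only [List.append_nil, sub_self, normInf_zero]
      exact DB_nonneg ℓ L _
  | cons c r' ih =>
      intro l hlen
      have hlen' : l.length + (r'.length + 1) ≤ N := by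
        simpa [List.length_append] using hlen
      have hk : l.length < N := by omega
      have hstep := h𝒯.2.2 l hk
      have h1 : normInf (𝒯 (l ++ [c]) - 𝒯 l) ≤ 2 * ((L : ℤ) * (ℓ : ℤ) ^ (N - l.length)) := by
        have hge : (0:ℤ) ≤ (L : ℤ) * (ℓ : ℤ) ^ (N - l.length) := by positivity
        have hc : c = 0 ∨ c = 1 := by
          rcases c with ⟨_ | _ | n, hcv⟩
          · exact Or.inl rfl
          · exact Or.inr rfl
          · omega
        rcases hc with rfl | rfl
        · rw [hstep.1]; linarith
        · rw [hstep.2]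
      have hassoc : l ++ c :: r' = (l ++ [c]) ++ r' := by simp
      have h2 : normInf (𝒯 ((l ++ [c]) ++ r') - 𝒯 (l ++ [c])) ≤ DB ℓ L (N - (l.length + 1)) := by
        have := ih (l ++ [c]) (by simp [List.length_append]; omega)
        simpa [List.length_append] using this
      have htr := normInf_triangle (𝒯 (l ++ c :: r')) (𝒯 (l ++ [c])) (𝒯 l)
      rw [hassoc] at htr ⊢
      obtain ⟨j, hj⟩ : ∃ j, N - l.length = j + 1 := ⟨N - l.length - 1, by omega⟩
      have hj' : N - (l.length + 1) = j := by omega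
      rw [hj]
      rw [hj'] at h2
      rw [hj] at h1
      simp only [DB]
      linarith

/-- Two distinct lists of the same length split at a common prefix. -/
lemma split_lists {α : Type*} : ∀ (m m' : List α), m.length = m'.length → m ≠ m' →
    ∃ (l : List α) (a b : α) (r r' : List α),
      a ≠ b ∧ m = l ++ a :: r ∧ m' = l ++ b :: r' ∧ r.length = r'.length
  | [], [], _, hne => absurd rfl hne
  | [], (b :: m'), hlen, _ => by simp at hlen
  | (a :: m), [], hlen, _ => by simp at hlen
  | (a :: m), (b :: m'), hlen, hne => by
      by_cases hab : a = b
      · subst hab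
        have hlen' : m.length = m'.length := by simpa using hlen
        have hne' : m ≠ m' := by intro h; exact hne (by rw [h])
        obtain ⟨l, x, y, r, r', hxy, hm, hm', hr⟩ := split_lists m m' hlen' hne'
        exact ⟨a :: l, x, y, r, r', hxy, by simp [hm], by simp [hm'], hr⟩
      · exact ⟨[], a, b, m, m', hab, rfl, rfl, by simpa using hlen⟩

/-- Separation of leaves: distinct leaves lie at `ℓ∞`-distance at least `Lℓ`. -/
lemma leaf_sep {d ℓ L N : ℕ} (hℓ : 6 ≤ ℓ) {𝒯 : List (Fin 2) → (Fin d → ℤ)}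
    (h𝒯 : IsProperEmbedding d ℓ L N 𝒯) {m m' : List (Fin 2)}
    (hm : m.length = N) (hm' : m'.length = N) (hne : m ≠ m') :
    (L : ℤ) * (ℓ : ℤ) ≤ normInf (𝒯 m - 𝒯 m') := by
  obtain ⟨l, a, b, r, r', hab, hmeq, hm'eq, hrr⟩ :=
    split_lists m m' (by rw [hm, hm']) hne
  have hlen : l.length + (r.length + 1) = N := by
    rw [← hm, hmeq]; simp [List.length_append]
  have hk : l.length < N := by omega
  have hstep := h𝒯.2.2 l hk
  -- sibling separation
  have hsib : (L : ℤ) * (ℓ : ℤ) ^ (N - l.length) ≤ normInf (𝒯 (l ++ [a]) - 𝒯 (l ++ [b])) := by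
    have htr := normInf_triangle (𝒯 (l ++ [1])) (𝒯 (l ++ [0])) (𝒯 l)
    have h01 : (L : ℤ) * (ℓ : ℤ) ^ (N - l.length) ≤ normInf (𝒯 (l ++ [0]) - 𝒯 (l ++ [1])) := by
      have htr2 := normInf_triangle (𝒯 (l ++ [1])) (𝒯 (l ++ [0])) (𝒯 l)
      have e := normInf_sub_comm (𝒯 (l ++ [0])) (𝒯 (l ++ [1]))
      have e2 := normInf_triangle (𝒯 (l ++ [1])) (𝒯 l) (𝒯 (l ++ [0]))
      have e3 := normInf_sub_comm (𝒯 l) (𝒯 (l ++ [0]))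
      rw [hstep.2] at e2
      linarith [hstep.1, hstep.2]
    have : (a = 0 ∧ b = 1) ∨ (a = 1 ∧ b = 0) := by
      rcases a with ⟨_ | _ | na, hav⟩ <;> rcases b with ⟨_ | _ | nb, hbv⟩ <;>
        simp_all <;> omega
    rcases this with ⟨ha, hb⟩ | ⟨ha, hb⟩
    · rw [ha, hb]; exact h01
    · rw [ha, hb, normInf_sub_comm]; exact h01
  -- drifts
  have hdr : normInf (𝒯 m - 𝒯 (l ++ [a])) ≤ DB ℓ L (N - (l.length + 1)) := by
    have : m = (l ++ [a]) ++ r := by rw [hmeq]; simp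
    rw [this]
    have := drift h𝒯 r (l ++ [a]) (by rw [← this, hm])
    simpa [List.length_append] using this
  have hdr' : normInf (𝒯 m' - 𝒯 (l ++ [b])) ≤ DB ℓ L (N - (l.length + 1)) := by
    have : m' = (l ++ [b]) ++ r' := by rw [hm'eq]; simp
    rw [this]
    have := drift h𝒯 r' (l ++ [b]) (by rw [← this, hm'])
    simpa [List.length_append] using this
  -- assemble
  obtain ⟨j, hj⟩ : ∃ j, N - l.length = j + 1 := ⟨N - l.length - 1, by omega⟩
  have hj' : N - (l.length + 1) = j := by omega
  rw [hj'] at hdr hdr'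
  rw [hj] at hsib
  have hkey := DB_key (L := L) hℓ j
  have htr1 := normInf_triangle (𝒯 (l ++ [a])) (𝒯 m) (𝒯 (l ++ [b]))
  have htr2 := normInf_triangle (𝒯 m) (𝒯 m') (𝒯 (l ++ [b]))
  have e1 := normInf_sub_comm (𝒯 (l ++ [a])) (𝒯 m)
  have e2 := normInf_sub_comm (𝒯 m') (𝒯 (l ++ [b]))
  linarith


/-- If for every leaf `m` of a proper embedding `𝒯` the annulus
`B(𝒯(m),L) ↔*_ξ B(𝒯(m),2L)ᶜ` is crossed, then there is an admissible pair
`(𝒳,𝒴)` such that every `y ∈ 𝒴` escapes distance `L/4` before time `T`, and every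
pair of *-neighbors `x, z ∈ 𝒳` satisfies `ξ(x) = ξ(z) = 1`, both walkers stay
within distance `L/4` of their starting points up to time `T`, and the two walkers
do not meet before time `T`. -/
theorem crossings_imply_admissible_pair (d ℓ L N : ℕ)
    (hd : 3 ≤ d) (hℓ : 6 ≤ ℓ) (hL : 3 ≤ L) (hN : 1 ≤ N)
    (W : (Fin d → ℤ) → ℝ → (Fin d → ℤ)) (hW : IsCoalescing W)
    (T : ℝ) (hT : 0 ≤ T)
    (ξ : (Fin d → ℤ) → Fin 2)
    (𝒯 : List (Fin 2) → (Fin d → ℤ)) (h𝒯 : IsProperEmbedding d ℓ L N 𝒯)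
    (hcross : ∀ m : List (Fin 2), m.length = N →
      StarConn ξ (ballInf (𝒯 m) (L : ℤ)) (ballInf (𝒯 m) (2 * (L : ℤ)))ᶜ) :
    ∃ X Y : Set (Fin d → ℤ), IsAdmissiblePair d ℓ L N 𝒯 X Y ∧
      (∀ y ∈ Y, ∃ t : ℝ, 0 ≤ t ∧ t ≤ T ∧ (L : ℤ) < 4 * normInf (W y t - y)) ∧
      (∀ x ∈ X, ∀ z ∈ X, normInf (x - z) = 1 →
        ξ x = 1 ∧ ξ z = 1 ∧
        (∀ t : ℝ, 0 ≤ t → t ≤ T → 4 * normInf (W x t - x) ≤ (L : ℤ)) ∧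
        (∀ t : ℝ, 0 ≤ t → t ≤ T → 4 * normInf (W z t - z) ≤ (L : ℤ)) ∧
        (∀ t : ℝ, 0 ≤ t → t ≤ T → W x t ≠ W z t)) := by
  classical
  have hLZ : (3 : ℤ) ≤ (L : ℤ) := by exact_mod_cast hL
  have hℓZ : (6 : ℤ) ≤ (ℓ : ℤ) := by exact_mod_cast hℓ
  -- points in balls around distinct leaves are far apart
  have hsep : ∀ m m' : List (Fin 2), m.length = N → m'.length = N → m ≠ m' →
      ∀ x ∈ ballInf (𝒯 m) (2 * (L : ℤ)), ∀ z ∈ ballInf (𝒯 m') (2 * (L : ℤ)),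
        2 * (L : ℤ) ≤ normInf (x - z) := by
    intro m m' hm hm' hne x hx z hz
    have hs := leaf_sep hℓ h𝒯 hm hm' hne
    have t1 := normInf_triangle (𝒯 m) x (𝒯 m')
    have t2 := normInf_triangle x z (𝒯 m')
    have e1 := normInf_sub_comm (𝒯 m) x
    have hx' : normInf (x - 𝒯 m) ≤ 2 * (L : ℤ) := hx
    have hz' : normInf (z - 𝒯 m') ≤ 2 * (L : ℤ) := hz
    have hl6 : 6 * (L : ℤ) ≤ (L : ℤ) * (ℓ : ℤ) := by nlinarith
    linarith
  -- per-leaf selection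
  have hsel : ∀ m : List (Fin 2), ∃ p : Set (Fin d → ℤ) × Set (Fin d → ℤ),
      m.length = N →
      ((∃ x z : Fin d → ℤ, p.1 = {x, z} ∧ p.2 = ∅ ∧
          x ∈ ballInf (𝒯 m) (2 * (L : ℤ)) ∧ z ∈ ballInf (𝒯 m) (2 * (L : ℤ)) ∧
          normInf (x - z) = 1 ∧ ξ x = 1 ∧ ξ z = 1 ∧
          (∀ t : ℝ, 0 ≤ t → t ≤ T → 4 * normInf (W x t - x) ≤ (L : ℤ)) ∧
          (∀ t : ℝ, 0 ≤ t → t ≤ T → 4 * normInf (W z t - z) ≤ (L : ℤ)) ∧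
          (∀ t : ℝ, 0 ≤ t → t ≤ T → W x t ≠ W z t)) ∨
       (∃ y : Fin d → ℤ, p.1 = ∅ ∧ p.2 = {y} ∧ y ∈ ballInf (𝒯 m) (2 * (L : ℤ)) ∧
          ∃ t : ℝ, 0 ≤ t ∧ t ≤ T ∧ (L : ℤ) < 4 * normInf (W y t - y))) := by
    intro m
    by_cases hm : m.length = N
    · rcases perLeaf hL hW hT ξ (𝒯 m) (hcross m hm) with ⟨y, hy, ht⟩ | ⟨x, z, h⟩
      · exact ⟨(∅, {y}), fun _ => Or.inr ⟨y, rfl, rfl, hy, ht⟩⟩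
      · exact ⟨({x, z}, ∅), fun _ => Or.inl ⟨x, z, rfl, rfl, h.1, h.2.1, h.2.2.1,
          h.2.2.2.1, h.2.2.2.2.1, h.2.2.2.2.2.1, h.2.2.2.2.2.2.1, h.2.2.2.2.2.2.2⟩⟩
    · exact ⟨(∅, ∅), fun h => absurd h hm⟩
  choose F hF using hsel
  set X : Set (Fin d → ℤ) := ⋃ (m : List (Fin 2)) (_ : m.length = N), (F m).1 with hXdef
  set Y : Set (Fin d → ℤ) := ⋃ (m : List (Fin 2)) (_ : m.length = N), (F m).2 with hYdef
  have hXmem : ∀ x, x ∈ X ↔ ∃ m, m.length = N ∧ x ∈ (F m).1 := by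
    intro x; simp [hXdef, Set.mem_iUnion]
  have hYmem : ∀ x, x ∈ Y ↔ ∃ m, m.length = N ∧ x ∈ (F m).2 := by
    intro x; simp [hYdef, Set.mem_iUnion]
  have hFsub1 : ∀ m, m.length = N → (F m).1 ⊆ ballInf (𝒯 m) (2 * (L : ℤ)) := by
    intro m hm
    rcases hF m hm with ⟨x, z, hp1, _, hx, hz, _⟩ | ⟨y, hp1, _⟩
    · rw [hp1]
      intro w hw
      rcases hw with rfl | hw
      · exact hx
      · rw [Set.mem_singleton_iff] at hw; rw [hw]; exact hz
    · rw [hp1]; exact Set.empty_subset _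
  have hFsub2 : ∀ m, m.length = N → (F m).2 ⊆ ballInf (𝒯 m) (2 * (L : ℤ)) := by
    intro m hm
    rcases hF m hm with ⟨x, z, _, hp2, _⟩ | ⟨y, _, hp2, hy, _⟩
    · rw [hp2]; exact Set.empty_subset _
    · rw [hp2]
      intro w hw
      rw [Set.mem_singleton_iff] at hw; rw [hw]; exact hy
  -- ball ∩ X is exactly the local choice
  have hballX : ∀ m, m.length = N → ballInf (𝒯 m) (2 * (L : ℤ)) ∩ X = (F m).1 := by
    intro m hm
    ext w
    constructor
    · rintro ⟨hwball, hwX⟩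
      obtain ⟨m', hm', hwF⟩ := (hXmem w).mp hwX
      by_cases hmm : m' = m
      · rwa [hmm] at hwF
      · exfalso
        have := hsep m m' hm hm' (fun h => hmm h.symm) w hwball w (hFsub1 m' hm' hwF)
        rw [sub_self, normInf_zero] at this
        linarith
    · intro hw
      exact ⟨hFsub1 m hm hw, (hXmem w).mpr ⟨m, hm, hw⟩⟩
  have hballY : ∀ m, m.length = N → ballInf (𝒯 m) (2 * (L : ℤ)) ∩ Y = (F m).2 := by
    intro m hm
    ext w
    constructor
    · rintro ⟨hwball, hwY⟩
      obtain ⟨m', hm', hwF⟩ := (hYmem w).mp hwY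
      by_cases hmm : m' = m
      · rwa [hmm] at hwF
      · exfalso
        have := hsep m m' hm hm' (fun h => hmm h.symm) w hwball w (hFsub2 m' hm' hwF)
        rw [sub_self, normInf_zero] at this
        linarith
    · intro hw
      exact ⟨hFsub2 m hm hw, (hYmem w).mpr ⟨m, hm, hw⟩⟩
  refine ⟨X, Y, ⟨?_, ?_, ?_⟩, ?_, ?_⟩
  -- (1) containment
  · intro x hx
    rcases hx with hx | hx
    · obtain ⟨m, hm, hxF⟩ := (hXmem x).mp hx
      exact ⟨m, hm, hFsub1 m hm hxF⟩
    · obtain ⟨m, hm, hxF⟩ := (hYmem x).mp hx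
      exact ⟨m, hm, hFsub2 m hm hxF⟩
  -- (2) cardinalities
  · intro m hm
    rw [hballX m hm, hballY m hm]
    rcases hF m hm with ⟨x, z, hp1, hp2, hx, hz, hnorm, _⟩ | ⟨y, hp1, hp2, _⟩
    · left
      refine ⟨?_, hp2⟩
      rw [hp1]
      exact Set.ncard_pair (normInf_ne_zero_of_ne hnorm)
    · right
      refine ⟨hp1, ?_⟩
      rw [hp2]
      exact Set.ncard_singleton y
  -- (3) pairs in a ball are *-neighbors
  · intro m hm x y hxy heq
    rw [hballX m hm] at heq
    rcases hF m hm with ⟨xm, zm, hp1, _, _, _, hnorm, _⟩ | ⟨ym, hp1, _⟩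
    · rw [hp1] at heq
      have hxmem : x = xm ∨ x = zm := by
        have : x ∈ ({xm, zm} : Set (Fin d → ℤ)) := by rw [heq]; simp
        simpa using this
      have hymem : y = xm ∨ y = zm := by
        have : y ∈ ({xm, zm} : Set (Fin d → ℤ)) := by rw [heq]; simp
        simpa using this
      rcases hxmem with rfl | rfl <;> rcases hymem with rfl | rfl
      · exact absurd rfl hxy
      · exact hnorm
      · rw [normInf_sub_comm]; exact hnorm
      · exact absurd rfl hxy
    · rw [hp1] at heq
      exfalso
      have : x ∈ (∅ : Set (Fin d → ℤ)) := by rw [heq]; simp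
      exact this
  -- (4) escape for Y
  · intro y hy
    obtain ⟨m, hm, hyF⟩ := (hYmem y).mp hy
    rcases hF m hm with ⟨_, _, _, hp2, _⟩ | ⟨ym, _, hp2, _, hesc⟩
    · rw [hp2] at hyF; exact absurd hyF (Set.notMem_empty y)
    · rw [hp2, Set.mem_singleton_iff] at hyF
      rw [hyF]; exact hesc
  -- (5) properties of pairs in X
  · intro x hx z hz hnorm
    obtain ⟨m, hm, hxF⟩ := (hXmem x).mp hx
    obtain ⟨m', hm', hzF⟩ := (hXmem z).mp hz
    have hxz : x ≠ z := normInf_ne_zero_of_ne hnorm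
    have hmm : m = m' := by
      by_contra hne
      have := hsep m m' hm hm' hne x (hFsub1 m hm hxF) z (hFsub1 m' hm' hzF)
      rw [hnorm] at this
      linarith
    subst hmm
    rcases hF m hm with ⟨xm, zm, hp1, _, _, _, _, hξx, hξz, hcx, hcz, hne⟩ | ⟨ym, hp1, _⟩
    · rw [hp1] at hxF hzF
      have hx' : x = xm ∨ x = zm := by simpa using hxF
      have hz' : z = xm ∨ z = zm := by simpa using hzF
      rcases hx' with rfl | rfl <;> rcases hz' with rfl | rfl
      · exact absurd rfl hxz
      · exact ⟨hξx, hξz, hcx, hcz, hne⟩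
      · exact ⟨hξz, hξx, hcz, hcx, fun t h1 h2 h => hne t h1 h2 h.symm⟩
      · exact absurd rfl hxz
    · rw [hp1] at hxF
      exact absurd hxF (Set.notMem_empty x)
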